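/- If p ⊑_p2p q and p ⇓p2p s (for s ∈ Act*), then for every B ∈ A(q,s) there exists a set A ∈ A(p,s) such that A ∩ uaU(p,s) ⊆ B. -/
import Mathlib


namespace MTP

/-- Processes of infinitary CCS with success.
`pre none p` is `τ.p`, `pre (some a) p` is `a.p`.
`sum f` is a countable sum `Σ_{i∈I} p_i` where `I = {n | f n ≠ none}`. -/
inductive Proc (Act : Type) (Const : Type) : Type where
  | one : Proc Act Const
  | const : Const → Proc Act Const
  | pre : Option Act → Proc Act Const → Proc Act Const
  | sum : (ℕ → Option (Proc Act Const)) → Proc Act Const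

namespace Proc
/-- The empty sum `0`. -/
def nil {Act Const : Type} : Proc Act Const := .sum fun _ => none
/-- Binary external sum `p + q`. -/
def ext {Act Const : Type} (p q : Proc Act Const) : Proc Act Const :=
  .sum fun n => if n = 0 then some p else if n = 1 then some q else none
end Proc

/-- Labels: visible actions, τ, and the success action ✓. -/
inductive Label (Act : Type) : Type where
  | act : Act → Label Act
  | tau : Label Act
  | ok : Label Act

/-- A CCS signature: an involutive complementation on actions, together with
a definition for every constant. -/
structure CCS (Act : Type) (Const : Type) : Type where
  co : Act → Act
  co_invol : ∀ a, co (co a) = a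
  defn : Const → Proc Act Const

variable {Act Const : Type}

/-- The transition relation of infinitary CCS with success. -/
inductive Step (S : CCS Act Const) : Proc Act Const → Label Act → Proc Act Const → Prop where
  | one : Step S .one .ok .nil
  | preAct (a : Act) (p : Proc Act Const) : Step S (.pre (some a) p) (.act a) p
  | preTau (p : Proc Act Const) : Step S (.pre none p) .tau p
  | sum {f : ℕ → Option (Proc Act Const)} {i : ℕ} {p q : Proc Act Const} {l : Label Act} :
      f i = some p → Step S p l q → Step S (.sum f) l q
  | const {A : Const} {l : Label Act} {q : Proc Act Const} :
      Step S (S.defn A) l q → Step S (.const A) l q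

/-- `p` can report success. -/
def CanOk (S : CCS Act Const) (p : Proc Act Const) : Prop := ∃ q, Step S p .ok q

/-- `p` has no τ-transition. -/
def Stable (S : CCS Act Const) (p : Proc Act Const) : Prop := ¬ ∃ q, Step S p .tau q

/-- τ-transitions of a parallel composition `p ∥ r` (server component first). -/
inductive ParTau (S : CCS Act Const) :
    Proc Act Const × Proc Act Const → Proc Act Const × Proc Act Const → Prop where
  | left {p p' r : Proc Act Const} : Step S p .tau p' → ParTau S (p, r) (p', r)
  | right {p r r' : Proc Act Const} : Step S r .tau r' → ParTau S (p, r) (p, r')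
  | sync {p p' r r' : Proc Act Const} {a : Act} :
      Step S p (.act a) p' → Step S r (.act (S.co a)) r' → ParTau S (p, r) (p', r')

/-- A state of a composition is stuck if it has no τ-transition. -/
def StateStuck (S : CCS Act Const) (st : Proc Act Const × Proc Act Const) : Prop :=
  ¬ ∃ t, ParTau S st t

/-- `ρ` encodes a maximal computation: at each stage either a real τ-step is taken, or the
state is stuck and stutters forever (encoding a finite maximal computation). -/
def MaxComp (S : CCS Act Const) (ρ : ℕ → Proc Act Const × Proc Act Const) : Prop :=
  ∀ k, ParTau S (ρ k) (ρ (k + 1)) ∨ (StateStuck S (ρ k) ∧ ρ (k + 1) = ρ k)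

/-- `p Must r`: every maximal computation of `p ∥ r` is client-successful. -/
def Must (S : CCS Act Const) (p r : Proc Act Const) : Prop :=
  ∀ ρ : ℕ → Proc Act Const × Proc Act Const,
    ρ 0 = (p, r) → MaxComp S ρ → ∃ k, CanOk S (ρ k).2

/-- `p MustSC r`: every maximal computation of `p ∥ r` is successful (both components
eventually can report success). -/
def MustSC (S : CCS Act Const) (p r : Proc Act Const) : Prop :=
  ∀ ρ : ℕ → Proc Act Const × Proc Act Const,
    ρ 0 = (p, r) → MaxComp S ρ → (∃ k, CanOk S (ρ k).2) ∧ (∃ l, CanOk S (ρ l).1)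

/-- The server testing preorder `p ⊑_svr q`. -/
def svrLe (S : CCS Act Const) (p q : Proc Act Const) : Prop :=
  ∀ r, Must S p r → Must S q r

/-- The client testing preorder `r₁ ⊑_clt r₂`. -/
def cltLe (S : CCS Act Const) (r₁ r₂ : Proc Act Const) : Prop :=
  ∀ p, Must S p r₁ → Must S p r₂

/-- The peer testing preorder `p ⊑_p2p q`. -/
def p2pLe (S : CCS Act Const) (p q : Proc Act Const) : Prop :=
  ∀ r, MustSC S p r → MustSC S q r

/-- Weak transition `p ⟹^s q` for finite traces `s ∈ Act*`. -/
inductive Weak (S : CCS Act Const) : Proc Act Const → List Act → Proc Act Const → Prop where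
  | refl (p : Proc Act Const) : Weak S p [] p
  | tau {p p' q : Proc Act Const} {s : List Act} :
      Step S p .tau p' → Weak S p' s q → Weak S p s q
  | act {p p' q : Proc Act Const} {a : Act} {s : List Act} :
      Step S p (.act a) p' → Weak S p' s q → Weak S p (a :: s) q

/-- Unsuccessful weak transition `p ⟹̸✓^s q`: as `Weak` but no state passed through
(including the end points) can report success. -/
inductive UWeak (S : CCS Act Const) : Proc Act Const → List Act → Proc Act Const → Prop where
  | refl {p : Proc Act Const} : ¬ CanOk S p → UWeak S p [] p
  | tau {p p' q : Proc Act Const} {s : List Act} :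
      ¬ CanOk S p → Step S p .tau p' → UWeak S p' s q → UWeak S p s q
  | act {p p' q : Proc Act Const} {a : Act} {s : List Act} :
      ¬ CanOk S p → Step S p (.act a) p' → UWeak S p' s q → UWeak S p (a :: s) q

/-- View `Option Act` (`none` = τ) as a label. -/
def optLabel : Option Act → Label Act
  | some a => .act a
  | none => .tau

/-- The length-`n` prefix of an infinite trace `u ∈ Act^∞`. -/
def prefixList (u : ℕ → Act) (n : ℕ) : List Act := List.ofFn fun i : Fin n => u i.1

/-- Infinite weak transition `p ⟹^u` for `u ∈ Act^∞`. -/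
def InfWeak (S : CCS Act Const) (p : Proc Act Const) (u : ℕ → Act) : Prop :=
  ∃ (ρ : ℕ → Proc Act Const) (ℓ : ℕ → Option Act),
    ρ 0 = p ∧ (∀ k, Step S (ρ k) (optLabel (ℓ k)) (ρ (k + 1))) ∧
    ∀ n, ∃ k, (List.range k).filterMap ℓ = prefixList u n

/-- Infinite unsuccessful weak transition `p ⟹̸✓^u` for `u ∈ Act^∞`. -/
def InfUWeak (S : CCS Act Const) (p : Proc Act Const) (u : ℕ → Act) : Prop :=
  ∃ (ρ : ℕ → Proc Act Const) (ℓ : ℕ → Option Act),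
    ρ 0 = p ∧ (∀ k, Step S (ρ k) (optLabel (ℓ k)) (ρ (k + 1))) ∧
    (∀ k, ¬ CanOk S (ρ k)) ∧
    ∀ n, ∃ k, (List.range k).filterMap ℓ = prefixList u n

/-- `p ⇓`: no infinite sequence of τ-transitions from `p`. -/
def Conv (S : CCS Act Const) (p : Proc Act Const) : Prop :=
  ¬ ∃ ρ : ℕ → Proc Act Const, ρ 0 = p ∧ ∀ k, Step S (ρ k) .tau (ρ (k + 1))

/-- `p after s`. -/
def after (S : CCS Act Const) (p : Proc Act Const) (s : List Act) : Set (Proc Act Const) :=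
  {q | Weak S p s q}

/-- `p afterU s`: residuals after unsuccessful traces. -/
def afterU (S : CCS Act Const) (p : Proc Act Const) (s : List Act) : Set (Proc Act Const) :=
  {q | UWeak S p s q}

-- `⊕X = Σ_{x∈X} τ.x` for a nonempty countable set `X` (junk value otherwise).
open scoped Classical in
noncomputable def bigOplus (X : Set (Proc Act Const)) : Proc Act Const :=
  if h : ∃ f : ℕ → Proc Act Const, Set.range f = X then
    Proc.sum fun n => some (.pre none (h.choose n))
  else Proc.nil

/-- The ready set `S(q)`. -/
def ready (S : CCS Act Const) (q : Proc Act Const) : Set Act :=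
  {a | ∃ q', Step S q (.act a) q'}

/-- The acceptance set `A(p, s)`. -/
def acc (S : CCS Act Const) (p : Proc Act Const) (s : List Act) : Set (Set Act) :=
  {A | ∃ q, Weak S p s q ∧ Stable S q ∧ A = ready S q}

/-- The unsuccessful acceptance set `A✗(p, s)`. -/
def accU (S : CCS Act Const) (p : Proc Act Const) (s : List Act) : Set (Set Act) :=
  {A | ∃ q, UWeak S p s q ∧ Stable S q ∧ A = ready S q}

/-- The usable clients. -/
def Uclt (S : CCS Act Const) : Set (Proc Act Const) := {r | ∃ p, Must S p r}

/-- The usable servers. -/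
def Usvr (S : CCS Act Const) : Set (Proc Act Const) := {p | ∃ r, Must S p r}

/-- Client usability along an unsuccessful trace: `r ⇓U s`. -/
def usbU (S : CCS Act Const) : Proc Act Const → List Act → Prop
  | r, [] => r ∈ Uclt S
  | r, a :: s => r ∈ Uclt S ∧ ((∃ q, UWeak S r [a] q) → usbU S (bigOplus (afterU S r [a])) s)

/-- Client usability along an infinite trace. -/
def usbUInf (S : CCS Act Const) (r : Proc Act Const) (u : ℕ → Act) : Prop :=
  ∀ n, usbU S r (prefixList u n)

/-- Usable actions of a client after `s`: `uaU(r, s)`. -/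
def uaU (S : CCS Act Const) (r : Proc Act Const) (s : List Act) : Set Act :=
  {a | (∃ q, UWeak S r (s ++ [a]) q) → usbU S r (s ++ [a])}

/-- Convergence along a trace: `p ⇓ s`. -/
def convAlong (S : CCS Act Const) : Proc Act Const → List Act → Prop
  | p, [] => Conv S p
  | p, a :: s => Conv S p ∧ ((∃ q, Weak S p [a] q) → convAlong S (bigOplus (after S p [a])) s)

/-- Server usability along a trace: `p ⇓U' s`. -/
def usbS (S : CCS Act Const) : Proc Act Const → List Act → Prop
  | p, [] => p ∈ Usvr S
  | p, a :: s => p ∈ Usvr S ∧ ((∃ q, Weak S p [a] q) → usbS S (bigOplus (after S p [a])) s)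

/-- Server convergence `p ⇓svr s`. -/
def convS (S : CCS Act Const) (p : Proc Act Const) (s : List Act) : Prop :=
  convAlong S p s ∧ usbS S p s

/-- Server convergence along an infinite trace. -/
def convSInf (S : CCS Act Const) (p : Proc Act Const) (u : ℕ → Act) : Prop :=
  ∀ n, convS S p (prefixList u n)

/-- Usable actions of a server after `s`: `uaS(p, s)`. -/
def uaS (S : CCS Act Const) (p : Proc Act Const) (s : List Act) : Set Act :=
  {a | (∃ q, Weak S p s q) → usbS S p (s ++ [a])}

/-- Peer convergence `p ⇓p2p s`. -/
def convP (S : CCS Act Const) (p : Proc Act Const) (s : List Act) : Prop :=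
  convAlong S p s ∧ usbU S p s

/-- Peer convergence along an infinite trace. -/
def convPInf (S : CCS Act Const) (p : Proc Act Const) (u : ℕ → Act) : Prop :=
  ∀ n, convP S p (prefixList u n)

/-- The semantic client preorder `r₁ ≼_clt r₂`. -/
def semClt (S : CCS Act Const) (r₁ r₂ : Proc Act Const) : Prop :=
  (∀ s : List Act, usbU S r₁ s →
    usbU S r₂ s ∧ ∀ B ∈ accU S r₂ s, ∃ A ∈ accU S r₁ s, A ∩ uaU S r₁ s ⊆ B) ∧
  (∀ s : List Act, usbU S r₁ s → (∃ q, UWeak S r₂ s q) → ∃ q, UWeak S r₁ s q) ∧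
  (∀ u : ℕ → Act, usbUInf S r₁ u → InfUWeak S r₂ u → InfUWeak S r₁ u)

/-- The semantic server preorder `p ≼_svr q`. -/
def semSvr (S : CCS Act Const) (p q : Proc Act Const) : Prop :=
  (∀ s : List Act, convS S p s →
    convS S q s ∧ ∀ B ∈ acc S q s, ∃ A ∈ acc S p s, A ∩ uaS S p s ⊆ B) ∧
  (∀ s : List Act, convS S p s → (∃ q', Weak S q s q') → ∃ p', Weak S p s p') ∧
  (∀ u : ℕ → Act, convSInf S p u → InfWeak S q u → InfWeak S p u)

/-- The auxiliary semantic peer relation `p ≼'_p2p q`. -/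
def semP2pAux (S : CCS Act Const) (p q : Proc Act Const) : Prop :=
  (∀ s : List Act, convP S p s →
    convAlong S q s ∧ ∀ B ∈ acc S q s, ∃ A ∈ acc S p s, A ∩ uaU S p s ⊆ B) ∧
  (∀ s : List Act, convP S p s → (∃ q', Weak S q s q') → ∃ p', Weak S p s p') ∧
  (∀ u : ℕ → Act, convPInf S p u → InfWeak S q u → InfWeak S p u)

/-- The semantic peer preorder `p ≼_p2p q`. -/
def semP2p (S : CCS Act Const) (p q : Proc Act Const) : Prop :=
  semClt S p q ∧ semP2pAux S p q


section Aux
variable {Act Const : Type}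

lemma step_pre_some {S : CCS Act Const} {a : Act} {x y : Proc Act Const} {l : Label Act}
    (h : Step S (.pre (some a) x) l y) : l = .act a ∧ y = x := by
  cases h; exact ⟨rfl, rfl⟩

lemma step_pre_none {S : CCS Act Const} {x y : Proc Act Const} {l : Label Act}
    (h : Step S (.pre none x) l y) : l = .tau ∧ y = x := by
  cases h; exact ⟨rfl, rfl⟩

lemma step_one_inv {S : CCS Act Const} {y : Proc Act Const} {l : Label Act}
    (h : Step S .one l y) : l = .ok ∧ y = .nil := by
  cases h; exact ⟨rfl, rfl⟩

lemma step_sum_inv {S : CCS Act Const} {f : ℕ → Option (Proc Act Const)}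
    {y : Proc Act Const} {l : Label Act} (h : Step S (.sum f) l y) :
    ∃ i x, f i = some x ∧ Step S x l y := by
  cases h with
  | sum hf hs => exact ⟨_, _, hf, hs⟩

lemma step_ext_inv {S : CCS Act Const} {x₁ x₂ y : Proc Act Const} {l : Label Act}
    (h : Step S (.ext x₁ x₂) l y) : Step S x₁ l y ∨ Step S x₂ l y := by
  rcases step_sum_inv h with ⟨i, z, hz, hs⟩
  by_cases h0 : i = 0
  · subst h0; simp only [Proc.ext, if_pos rfl] at hz
    exact Or.inl (by injection hz with h'; exact h' ▸ hs)
  · by_cases h1 : i = 1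
    · subst h1; simp only [Proc.ext, if_neg one_ne_zero, if_pos rfl] at hz
      exact Or.inr (by injection hz with h'; exact h' ▸ hs)
    · simp only [Proc.ext, if_neg h0, if_neg h1] at hz; exact absurd hz (by simp)

lemma step_ext_left {S : CCS Act Const} {x₁ x₂ y : Proc Act Const} {l : Label Act}
    (h : Step S x₁ l y) : Step S (.ext x₁ x₂) l y :=
  Step.sum (i := 0) (by simp [Proc.ext]) h

lemma step_ext_right {S : CCS Act Const} {x₁ x₂ y : Proc Act Const} {l : Label Act}
    (h : Step S x₂ l y) : Step S (.ext x₁ x₂) l y :=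
  Step.sum (i := 1) (by simp [Proc.ext]) h

lemma canOk_ext_one {S : CCS Act Const} {g : Proc Act Const} : CanOk S (.ext .one g) :=
  ⟨_, step_ext_left Step.one⟩

/-! ### Weak / UWeak utilities -/

lemma Weak.comp {S : CCS Act Const} {p y x : Proc Act Const} {t₁ t₂ : List Act}
    (h₁ : Weak S p t₁ y) (h₂ : Weak S y t₂ x) : Weak S p (t₁ ++ t₂) x := by
  induction h₁ with
  | refl => simpa
  | tau hs _ ih => exact .tau hs (ih h₂)
  | act hs _ ih => exact .act hs (ih h₂)

lemma Weak.decomp {S : CCS Act Const} {p x : Proc Act Const} {u : List Act}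
    (h : Weak S p u x) : ∀ a t, u = a :: t → ∃ y, Weak S p [a] y ∧ Weak S y t x := by
  induction h with
  | refl => intro a t h; cases h
  | tau hs _ ih =>
      intro a t rfl
      rcases ih a t rfl with ⟨y, h1, h2⟩
      exact ⟨y, .tau hs h1, h2⟩
  | act hs hw _ =>
      intro a t h
      injection h with h h'
      subst h; subst h'
      exact ⟨_, .act hs (.refl _), hw⟩

lemma Weak.snoc_tau {S : CCS Act Const} {p x x' : Proc Act Const} {t : List Act}
    (h : Weak S p t x) (hs : Step S x .tau x') : Weak S p t x' := by
  have := h.comp (.tau hs (.refl x'))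
  simpa using this

lemma Weak.snoc_act {S : CCS Act Const} {p x x' : Proc Act Const} {t : List Act} {a : Act}
    (h : Weak S p t x) (hs : Step S x (.act a) x') : Weak S p (t ++ [a]) x' :=
  h.comp (.act hs (.refl x'))

lemma UWeak.notOk_start {S : CCS Act Const} {p x : Proc Act Const} {t : List Act}
    (h : UWeak S p t x) : ¬ CanOk S p := by cases h <;> assumption

lemma UWeak.notOk_end {S : CCS Act Const} {p x : Proc Act Const} {t : List Act}
    (h : UWeak S p t x) : ¬ CanOk S x := by
  induction h with
  | refl h => exact h
  | tau _ _ _ ih => exact ih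
  | act _ _ _ ih => exact ih

lemma UWeak.comp {S : CCS Act Const} {p y x : Proc Act Const} {t₁ t₂ : List Act}
    (h₁ : UWeak S p t₁ y) (h₂ : UWeak S y t₂ x) : UWeak S p (t₁ ++ t₂) x := by
  induction h₁ with
  | refl _ => simpa
  | tau h hs _ ih => exact .tau h hs (ih h₂)
  | act h hs _ ih => exact .act h hs (ih h₂)

lemma UWeak.decomp {S : CCS Act Const} {p x : Proc Act Const} {u : List Act}
    (h : UWeak S p u x) : ∀ a t, u = a :: t → ∃ y, UWeak S p [a] y ∧ UWeak S y t x := by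
  induction h with
  | refl _ => intro a t h; cases h
  | tau h hs _ ih =>
      intro a t rfl
      rcases ih a t rfl with ⟨y, h1, h2⟩
      exact ⟨y, .tau h hs h1, h2⟩
  | act h hs hw _ =>
      intro a t he
      injection he with he he'
      subst he; subst he'
      exact ⟨_, .act h hs (.refl hw.notOk_start), hw⟩

lemma UWeak.snoc_tau {S : CCS Act Const} {p x x' : Proc Act Const} {t : List Act}
    (h : UWeak S p t x) (hs : Step S x .tau x') (h' : ¬ CanOk S x') : UWeak S p t x' := by
  have := h.comp (.tau h.notOk_end hs (.refl h'))
  simpa using this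

lemma UWeak.snoc_act {S : CCS Act Const} {p x x' : Proc Act Const} {t : List Act} {a : Act}
    (h : UWeak S p t x) (hs : Step S x (.act a) x') (h' : ¬ CanOk S x') :
    UWeak S p (t ++ [a]) x' :=
  h.comp (.act h.notOk_end hs (.refl h'))

/-! ### bigOplus -/

lemma step_bigOplus_iff {S : CCS Act Const} {X : Set (Proc Act Const)}
    (hex : ∃ f : ℕ → Proc Act Const, Set.range f = X) {l : Label Act} {y : Proc Act Const} :
    Step S (bigOplus X) l y ↔ l = .tau ∧ y ∈ X := by
  rw [bigOplus, dif_pos hex]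
  constructor
  · intro h
    rcases step_sum_inv h with ⟨i, z, hz, hs⟩
    injection hz with hz
    subst hz
    rcases step_pre_none hs with ⟨rfl, rfl⟩
    refine ⟨rfl, ?_⟩
    have h' := Set.ext_iff.mp hex.choose_spec (hex.choose i)
    exact h'.1 ⟨i, rfl⟩
  · rintro ⟨rfl, hy⟩
    rw [← hex.choose_spec] at hy
    rcases hy with ⟨i, rfl⟩
    exact Step.sum (i := i) rfl (.preTau _)

lemma exists_range_of_countable {X : Set (Proc Act Const)} (hc : X.Countable)
    (hne : X.Nonempty) : ∃ f : ℕ → Proc Act Const, Set.range f = X := by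
  rcases hc.exists_eq_range hne with ⟨f, hf⟩
  exact ⟨f, hf.symm⟩

lemma not_canOk_bigOplus {S : CCS Act Const} {X : Set (Proc Act Const)}
    (hex : ∃ f : ℕ → Proc Act Const, Set.range f = X) : ¬ CanOk S (bigOplus X) := by
  rintro ⟨y, hy⟩
  rcases (step_bigOplus_iff hex).1 hy with ⟨h, -⟩
  cases h

/-! ### Countability of reachable states and actions -/

def pickStep (S : CCS Act Const) : List ℕ → Proc Act Const → Option (Label Act × Proc Act Const)
  | [], .one => some (.ok, .nil)
  | [], .pre (some a) x => some (.act a, x)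
  | [], .pre none x => some (.tau, x)
  | [], _ => none
  | n :: c, .sum f => (f n).bind (pickStep S c)
  | _ :: c, .const A => pickStep S c (S.defn A)
  | _ :: _, _ => none

lemma pickStep_complete {S : CCS Act Const} {x y : Proc Act Const} {l : Label Act}
    (h : Step S x l y) : ∃ c, pickStep S c x = some (l, y) := by
  induction h with
  | one => exact ⟨[], rfl⟩
  | preAct a p => exact ⟨[], rfl⟩
  | preTau p => exact ⟨[], rfl⟩
  | @sum f i pp qq ll hf _ ih =>
      rcases ih with ⟨c, hc⟩
      exact ⟨i :: c, by simp [pickStep, hf, hc]⟩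
  | const _ ih =>
      rcases ih with ⟨c, hc⟩
      exact ⟨0 :: c, by simp [pickStep, hc]⟩

def reachCode (S : CCS Act Const) : List (List ℕ) → Proc Act Const → Option (Proc Act Const)
  | [], x => some x
  | c :: cs, x => (pickStep S c x).bind fun ly => reachCode S cs ly.2

def Reach (S : CCS Act Const) (x : Proc Act Const) : Set (Proc Act Const) :=
  {y | ∃ cs, reachCode S cs x = some y}

lemma reach_self {S : CCS Act Const} {x : Proc Act Const} : x ∈ Reach S x := ⟨[], rfl⟩

lemma reachCode_append {S : CCS Act Const} (cs cs' : List (List ℕ)) (x : Proc Act Const) :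
    reachCode S (cs ++ cs') x =
      (reachCode S cs x).bind fun y => reachCode S cs' y := by
  induction cs generalizing x with
  | nil => simp [reachCode]
  | cons c cs ih =>
      simp only [List.cons_append, reachCode]
      cases pickStep S c x with
      | none => simp
      | some ly => simp [ih]

lemma reach_trans {S : CCS Act Const} {x y z : Proc Act Const}
    (h₁ : y ∈ Reach S x) (h₂ : z ∈ Reach S y) : z ∈ Reach S x := by
  rcases h₁ with ⟨cs, hcs⟩
  rcases h₂ with ⟨cs', hcs'⟩
  exact ⟨cs ++ cs', by rw [reachCode_append, hcs]; simpa⟩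

lemma reach_step {S : CCS Act Const} {x y z : Proc Act Const} {l : Label Act}
    (h₁ : y ∈ Reach S x) (h₂ : Step S y l z) : z ∈ Reach S x := by
  rcases pickStep_complete h₂ with ⟨c, hc⟩
  exact reach_trans h₁ ⟨[c], by simp [reachCode, hc]⟩

lemma reach_countable {S : CCS Act Const} (x : Proc Act Const) : (Reach S x).Countable := by
  refine ((Set.countable_range fun cs => reachCode S cs x).preimage
    (Option.some_injective _)).mono ?_
  intro y hy
  rcases hy with ⟨cs, hcs⟩
  exact ⟨cs, hcs⟩

lemma weak_mem_reach {S : CCS Act Const} {p x : Proc Act Const} {t : List Act}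
    (h : Weak S p t x) : x ∈ Reach S p := by
  induction h with
  | refl => exact reach_self
  | tau hs _ ih => exact reach_trans (reach_step reach_self hs) ih
  | act hs _ ih => exact reach_trans (reach_step reach_self hs) ih

lemma uweak_mem_reach {S : CCS Act Const} {p x : Proc Act Const} {t : List Act}
    (h : UWeak S p t x) : x ∈ Reach S p := by
  induction h with
  | refl _ => exact reach_self
  | tau _ hs _ ih => exact reach_trans (reach_step reach_self hs) ih
  | act _ hs _ ih => exact reach_trans (reach_step reach_self hs) ih

lemma afterU_countable {S : CCS Act Const} (p : Proc Act Const) (t : List Act) :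
    (afterU S p t).Countable :=
  (reach_countable p).mono (fun _ hx => uweak_mem_reach hx)

lemma after_countable {S : CCS Act Const} (p : Proc Act Const) (t : List Act) :
    (after S p t).Countable :=
  (reach_countable p).mono (fun _ hx => weak_mem_reach hx)

def ActSet (S : CCS Act Const) (p : Proc Act Const) : Set Act :=
  {a | ∃ x ∈ Reach S p, ∃ y, Step S x (.act a) y}

lemma actSet_countable {S : CCS Act Const} (p : Proc Act Const) : (ActSet S p).Countable := by
  classical
  refine (((Set.countable_range fun cc : List (List ℕ) × List ℕ =>
      (reachCode S cc.1 p).bind fun x => (pickStep S cc.2 x).bind fun ly =>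
        match ly.1 with
        | .act a => some a
        | _ => none)).preimage (Option.some_injective _)).mono ?_
  rintro a ⟨x, ⟨cs, hcs⟩, y, hst⟩
  rcases pickStep_complete hst with ⟨c, hc⟩
  exact ⟨(cs, c), by simp [hcs, hc]⟩

end Aux


section Aux2
variable {Act Const : Type}

/-! ### Convergence lemmas -/

lemma conv_step {S : CCS Act Const} {p p' : Proc Act Const}
    (h : Conv S p) (hs : Step S p .tau p') : Conv S p' := by
  rintro ⟨ρ, h0, hst⟩
  exact h ⟨fun k => Nat.casesOn k p ρ, rfl, fun k => by
    cases k with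
    | zero => simpa [h0] using hs
    | succ k => exact hst k⟩

lemma conv_weak_nil {S : CCS Act Const} {p x : Proc Act Const} {u : List Act}
    (h : Weak S p u x) (hu : u = []) (hp : Conv S p) : Conv S x := by
  induction h with
  | refl => exact hp
  | tau hs _ ih => exact ih hu (conv_step hp hs)
  | act _ _ _ => cases hu

lemma convAlong_weak_conv {S : CCS Act Const} :
    ∀ (s : List Act) (p : Proc Act Const), convAlong S p s →
      ∀ (i : ℕ) (x : Proc Act Const), Weak S p (s.take i) x → Conv S x := by
  intro s
  induction s with
  | nil =>
      intro p h i x hx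
      exact conv_weak_nil hx (by simp) h
  | cons a s' ih =>
      intro p h i x hx
      cases i with
      | zero => exact conv_weak_nil hx (by simp) h.1
      | succ i =>
          rcases hx.decomp a (s'.take i) (by simp) with ⟨y, h1, h2⟩
          have hconv' := h.2 ⟨y, h1⟩
          have hex : ∃ f : ℕ → Proc Act Const, Set.range f = after S p [a] :=
            exists_range_of_countable (after_countable p [a]) ⟨y, h1⟩
          have hw : Weak S (bigOplus (after S p [a])) (s'.take i) x :=
            .tau ((step_bigOplus_iff hex).2 ⟨rfl, h1⟩) h2
          exact ih _ hconv' i x hw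

/-! ### Usability along prefixes, residual servers -/

lemma usbU_take {S : CCS Act Const} :
    ∀ (s : List Act) (r : Proc Act Const), usbU S r s → ∀ i, usbU S r (s.take i) := by
  intro s
  induction s with
  | nil => intro r h i; simpa using h
  | cons a s' ih =>
      intro r h i
      cases i with
      | zero => exact h.1
      | succ i => exact ⟨h.1, fun hg => ih _ (h.2 hg) i⟩

/-- The end residual `p` (if `t = []`) or `⊕(p afterU t)`. -/
noncomputable def wEnd (S : CCS Act Const) (r : Proc Act Const) : List Act → Proc Act Const
  | [] => r
  | a :: t => bigOplus (afterU S r (a :: t))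

@[simp] lemma wEnd_nil {S : CCS Act Const} {r : Proc Act Const} : wEnd S r [] = r := rfl

@[simp] lemma wEnd_cons {S : CCS Act Const} {r : Proc Act Const} {a : Act} {t : List Act} :
    wEnd S r (a :: t) = bigOplus (afterU S r (a :: t)) := rfl

lemma usbU_end_uclt {S : CCS Act Const} :
    ∀ (t : List Act) (r : Proc Act Const), usbU S r t →
      ∀ x, UWeak S r t x → wEnd S r t ∈ Uclt S := by
  intro t
  induction t with
  | nil => intro r h x _; exact (h : r ∈ Uclt S)
  | cons a t' ih =>
      intro r h x hx
      rcases hx.decomp a t' rfl with ⟨y, h1, h2⟩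
      have hg := h.2 ⟨y, h1⟩
      have hexV : ∃ f : ℕ → Proc Act Const, Set.range f = afterU S r [a] :=
        exists_range_of_countable (afterU_countable r [a]) ⟨y, h1⟩
      have hx' : UWeak S (bigOplus (afterU S r [a])) t' x :=
        .tau (not_canOk_bigOplus hexV) ((step_bigOplus_iff hexV).2 ⟨rfl, h1⟩) h2
      have hres := ih _ hg x hx'
      cases t' with
      | nil => simpa [wEnd] using hres
      | cons b t'' =>
          have hset : afterU S (bigOplus (afterU S r [a])) (b :: t'') = afterU S r (a :: b :: t'') := by
            ext z
            constructor
            · intro hz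
              cases hz with
              | tau h' hs hw =>
                  rcases (step_bigOplus_iff hexV).1 hs with ⟨-, hv⟩
                  exact (hv.comp hw : UWeak S r ([a] ++ b :: t'') z)
              | act h' hs hw =>
                  rcases (step_bigOplus_iff hexV).1 hs with ⟨h'', -⟩
                  cases h''
            · intro hz
              rcases hz.decomp a (b :: t'') rfl with ⟨v, hv1, hv2⟩
              exact .tau (not_canOk_bigOplus hexV) ((step_bigOplus_iff hexV).2 ⟨rfl, hv1⟩) hv2
          simpa [wEnd, hset] using hres

open scoped Classical in
/-- A chosen server making the residuals of `r` after `t` succeed as clients. -/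
noncomputable def gSrv (S : CCS Act Const) (r : Proc Act Const) (t : List Act) : Proc Act Const :=
  if h : ∃ g, Must S g (wEnd S r t) then h.choose else .nil

lemma gSrv_spec {S : CCS Act Const} {r : Proc Act Const} {t : List Act}
    (h : usbU S r t) {x : Proc Act Const} (hx : UWeak S r t x) :
    Must S (gSrv S r t) (wEnd S r t) := by
  have hU : ∃ g, Must S g (wEnd S r t) := usbU_end_uclt t r h x hx
  rw [gSrv, dif_pos hU]
  exact hU.choose_spec

lemma wEnd_uweak_nil {S : CCS Act Const} {r x : Proc Act Const} {t : List Act}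
    (hx : UWeak S r t x) : UWeak S (wEnd S r t) [] x := by
  cases t with
  | nil => exact hx
  | cons a t' =>
      have hex : ∃ f : ℕ → Proc Act Const, Set.range f = afterU S r (a :: t') :=
        exists_range_of_countable (afterU_countable r (a :: t')) ⟨x, hx⟩
      rw [wEnd_cons]
      exact .tau (not_canOk_bigOplus hex) ((step_bigOplus_iff hex).2 ⟨rfl, hx⟩)
        (.refl hx.notOk_end)

/-! ### MaxComp utilities -/

lemma maxComp_cons {S : CCS Act Const} {σ : ℕ → Proc Act Const × Proc Act Const}
    {st : Proc Act Const × Proc Act Const}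
    (h : MaxComp S σ) (hst : ParTau S st (σ 0)) :
    MaxComp S (fun k => Nat.casesOn k st σ) := by
  intro k
  cases k with
  | zero => exact Or.inl hst
  | succ k => exact h k

lemma maxComp_tail {S : CCS Act Const} {σ : ℕ → Proc Act Const × Proc Act Const}
    (h : MaxComp S σ) (m : ℕ) : MaxComp S (fun k => σ (m + k)) :=
  fun k => h (m + k)

lemma simgen {S : CCS Act Const}
    {R : (Proc Act Const × Proc Act Const) → (Proc Act Const × Proc Act Const) → Prop}
    (hsim : ∀ a b a', R a b → ParTau S a a' → ∃ b', ParTau S b b' ∧ R a' b')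
    (hstk : ∀ a b, R a b → StateStuck S a → StateStuck S b)
    {σ : ℕ → Proc Act Const × Proc Act Const} (hσ : MaxComp S σ)
    {b₀ : Proc Act Const × Proc Act Const} (h0 : R (σ 0) b₀) :
    ∃ ρ, MaxComp S ρ ∧ ρ 0 = b₀ ∧ ∀ k, R (σ k) (ρ k) := by
  classical
  have key : ∀ (k : ℕ) (b : Proc Act Const × Proc Act Const), R (σ k) b →
      ∃ b', (ParTau S (σ k) (σ (k+1)) → ParTau S b b') ∧
        (¬ ParTau S (σ k) (σ (k+1)) → b' = b) ∧ R (σ (k+1)) b' := by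
    intro k b hb
    by_cases h : ParTau S (σ k) (σ (k+1))
    · rcases hsim _ _ _ hb h with ⟨b', h1, h2⟩
      exact ⟨b', fun _ => h1, fun hc => absurd h hc, h2⟩
    · rcases hσ k with h' | ⟨hstuck, heq⟩
      · exact absurd h' h
      · exact ⟨b, fun h' => absurd h' h, fun _ => rfl, heq ▸ hb⟩
  let F : ∀ k : ℕ, {b // R (σ k) b} := fun k => Nat.rec ⟨b₀, h0⟩
    (fun k prev => ⟨(key k prev.1 prev.2).choose, (key k prev.1 prev.2).choose_spec.2.2⟩) k
  refine ⟨fun k => (F k).1, ?_, rfl, fun k => (F k).2⟩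
  intro k
  by_cases h : ParTau S (σ k) (σ (k+1))
  · exact Or.inl ((key k (F k).1 (F k).2).choose_spec.1 h)
  · rcases hσ k with h' | ⟨hstuck, heq⟩
    · exact absurd h' h
    · refine Or.inr ⟨hstk _ _ (F k).2 hstuck, ?_⟩
      exact (key k (F k).1 (F k).2).choose_spec.2.1 h

lemma prepend_uweak_nil {S : CCS Act Const} {g w x : Proc Act Const} {u : List Act}
    (hw : UWeak S w u x) (hu : u = [])
    {σ : ℕ → Proc Act Const × Proc Act Const} (hσ : MaxComp S σ) (h0 : σ 0 = (g, x)) :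
    ∃ ρ, MaxComp S ρ ∧ ρ 0 = (g, w) ∧
      ∀ m, (∃ k, ρ m = σ k) ∨ (∃ y, ρ m = (g, y) ∧ ¬ CanOk S y) := by
  induction hw with
  | refl h => exact ⟨σ, hσ, h0, fun m => Or.inl ⟨m, rfl⟩⟩
  | @tau w w' x' _ h hs hw' ih =>
      rcases ih hu h0 with ⟨ρ', hρ', h0', hcl⟩
      refine ⟨fun k => Nat.casesOn k (g, w) ρ', maxComp_cons hρ' ?_, rfl, ?_⟩
      · rw [h0']; exact ParTau.right hs
      · intro m
        cases m with
        | zero => exact Or.inr ⟨_, rfl, h⟩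
        | succ m => exact hcl m
  | act _ _ _ _ => cases hu

lemma pay_sim {S : CCS Act Const} (g : Proc Act Const) :
    ∀ a b a' : Proc Act Const × Proc Act Const,
      (b.2 = a.1 ∧ (b.1 = a.2 ∨ (a.2 = Proc.ext .one g ∧ b.1 = g))) → ParTau S a a' →
      ∃ b', ParTau S b b' ∧
        (b'.2 = a'.1 ∧ (b'.1 = a'.2 ∨ (a'.2 = Proc.ext .one g ∧ b'.1 = g))) := by
  rintro ⟨a1, a2⟩ ⟨b1, b2⟩ a' ⟨hb2, hd⟩ hpt
  obtain rfl : a1 = b2 := hb2.symm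
  cases hpt with
  | @left _ p' _ hs =>
      exact ⟨(b1, p'), ParTau.right hs, rfl, hd⟩
  | @right _ _ r' hs =>
      have hg : Step S b1 .tau r' := by
        rcases hd with rfl | ⟨rfl, rfl⟩
        · exact hs
        · rcases step_ext_inv hs with h1 | h1
          · rcases step_one_inv h1 with ⟨h', -⟩; cases h'
          · exact h1
      exact ⟨(r', a1), ParTau.left hg, rfl, Or.inl rfl⟩
  | @sync _ p' _ r' c hs1 hs2 =>
      have hg : Step S b1 (.act (S.co c)) r' := by
        rcases hd with rfl | ⟨rfl, rfl⟩
        · exact hs2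
        · rcases step_ext_inv hs2 with h1 | h1
          · rcases step_one_inv h1 with ⟨h', -⟩; cases h'
          · exact h1
      have hs1' : Step S a1 (.act (S.co (S.co c))) p' := by rw [S.co_invol]; exact hs1
      exact ⟨(r', p'), ParTau.sync hg hs1', rfl, Or.inl rfl⟩

lemma pay_stuck {S : CCS Act Const} (g : Proc Act Const) :
    ∀ a b : Proc Act Const × Proc Act Const,
      (b.2 = a.1 ∧ (b.1 = a.2 ∨ (a.2 = Proc.ext .one g ∧ b.1 = g))) →
      StateStuck S a → StateStuck S b := by
  rintro ⟨a1, a2⟩ ⟨b1, b2⟩ ⟨hb2, hd⟩ hstuck ⟨t, hpt⟩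
  obtain rfl : a1 = b2 := hb2.symm
  apply hstuck
  cases hpt with
  | @left _ y _ hs =>
      have : Step S a2 .tau y := by
        rcases hd with rfl | ⟨rfl, rfl⟩
        · exact hs
        · exact step_ext_right hs
      exact ⟨_, ParTau.right this⟩
  | @right _ _ y hs =>
      exact ⟨_, ParTau.left hs⟩
  | @sync _ y1 _ y2 c hs1 hs2 =>
      have h2 : Step S a2 (.act c) y1 := by
        rcases hd with rfl | ⟨rfl, rfl⟩
        · exact hs1
        · exact step_ext_right hs1
      have h2' : Step S a2 (.act (S.co (S.co c))) y1 := by rw [S.co_invol]; exact h2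
      exact ⟨_, ParTau.sync hs2 h2'⟩

lemma pay {S : CCS Act Const} {g w x : Proc Act Const}
    (hM : Must S g w) (hw : UWeak S w [] x)
    {σ : ℕ → Proc Act Const × Proc Act Const} (hσ : MaxComp S σ)
    (h0 : σ 0 = (x, Proc.ext .one g)) : ∃ m, CanOk S (σ m).1 := by
  have h0' : (fun b : _ × _ => b.2 = (σ 0).1 ∧
      (b.1 = (σ 0).2 ∨ ((σ 0).2 = Proc.ext .one g ∧ b.1 = g))) (g, x) := by
    rw [h0]; exact ⟨rfl, Or.inr ⟨rfl, rfl⟩⟩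
  rcases simgen (R := fun a b => b.2 = a.1 ∧ (b.1 = a.2 ∨ (a.2 = Proc.ext .one g ∧ b.1 = g)))
      (pay_sim g) (pay_stuck g) hσ h0' with ⟨ρ', hρ', h0'', hR⟩
  rcases prepend_uweak_nil hw rfl hρ' h0'' with ⟨ρ, hρ, hρ0, hcl⟩
  rcases hM ρ hρ0 hρ with ⟨m, hok⟩
  rcases hcl m with ⟨k, he⟩ | ⟨y, he, hny⟩
  · refine ⟨k, ?_⟩
    have := (hR k).1
    rw [← this, ← he]
    exact hok
  · rw [he] at hok
    exact absurd hok hny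

end Aux2


section Test
variable {Act Const : Type}

def Cset (S : CCS Act Const) (p : Proc Act Const) (s : List Act) (B : Set Act) : Set Act :=
  {a | a ∈ ActSet S p ∧ a ∈ uaU S p s ∧ a ∉ B}

lemma cset_countable (S : CCS Act Const) (p : Proc Act Const) (s : List Act) (B : Set Act) :
    (Cset S p s B).Countable :=
  (actSet_countable p).mono (fun _ ha => ha.1)

open scoped Classical in
noncomputable def cEnum (S : CCS Act Const) (p : Proc Act Const) (s : List Act) (B : Set Act) :
    ℕ → Option Act :=
  if h : ∃ f : ℕ → Option Act, ∀ a, (∃ j, f j = some a) ↔ a ∈ Cset S p s B then h.choose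
  else fun _ => none

lemma cEnum_spec (S : CCS Act Const) (p : Proc Act Const) (s : List Act) (B : Set Act) :
    ∀ a, (∃ j, cEnum S p s B j = some a) ↔ a ∈ Cset S p s B := by
  have h : ∃ f : ℕ → Option Act, ∀ a, (∃ j, f j = some a) ↔ a ∈ Cset S p s B := by
    rcases (Cset S p s B).eq_empty_or_nonempty with he | hne
    · refine ⟨fun _ => none, fun a => ?_⟩
      simp [he]
    · rcases (cset_countable S p s B).exists_eq_range hne with ⟨f, hf⟩
      refine ⟨fun j => some (f j), fun a => ?_⟩
      constructor
      · rintro ⟨j, hj⟩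
        injection hj with hj
        rw [hf]; exact ⟨j, hj⟩
      · intro ha
        rw [hf] at ha
        rcases ha with ⟨j, hj⟩
        exact ⟨j, congrArg some hj⟩
  rw [cEnum, dif_pos h]
  exact h.choose_spec

noncomputable def rend (S : CCS Act Const) (p : Proc Act Const) (s : List Act) (B : Set Act) :
    Proc Act Const :=
  .sum fun j => (cEnum S p s B j).map fun a =>
    .pre (some (S.co a)) (.ext .one (gSrv S p (s ++ [a])))

lemma step_rend_inv {S : CCS Act Const} {p : Proc Act Const} {s : List Act} {B : Set Act}
    {l : Label Act} {y : Proc Act Const} (h : Step S (rend S p s B) l y) :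
    ∃ a, a ∈ Cset S p s B ∧ l = .act (S.co a) ∧ y = .ext .one (gSrv S p (s ++ [a])) := by
  rcases step_sum_inv h with ⟨j, z, hz, hs⟩
  cases hc : cEnum S p s B j with
  | none => rw [hc] at hz; cases hz
  | some a =>
      rw [hc] at hz
      injection hz with hz
      subst hz
      rcases step_pre_some hs with ⟨rfl, rfl⟩
      exact ⟨a, (cEnum_spec S p s B a).1 ⟨j, hc⟩, rfl, rfl⟩

lemma step_rend_intro {S : CCS Act Const} {p : Proc Act Const} {s : List Act} {B : Set Act}
    {a : Act} (ha : a ∈ Cset S p s B) :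
    Step S (rend S p s B) (.act (S.co a)) (.ext .one (gSrv S p (s ++ [a]))) := by
  rcases (cEnum_spec S p s B a).2 ha with ⟨j, hj⟩
  exact Step.sum (i := j) (by rw [hj]; rfl) (.preAct _ _)

lemma not_canOk_rend {S : CCS Act Const} {p : Proc Act Const} {s : List Act} {B : Set Act} :
    ¬ CanOk S (rend S p s B) := by
  rintro ⟨y, h⟩
  rcases step_rend_inv h with ⟨a, -, hl, -⟩
  cases hl

noncomputable def spine (S : CCS Act Const) (p : Proc Act Const) (s : List Act) (B : Set Act) :
    List Act → List Act → Proc Act Const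
  | _, [] => rend S p s B
  | t, a :: u => .ext (.pre (some (S.co a)) (spine S p s B (t ++ [a]) u))
      (.pre none (.ext .one (gSrv S p t)))

noncomputable def rr (S : CCS Act Const) (p : Proc Act Const) (s : List Act) (B : Set Act)
    (i : ℕ) : Proc Act Const :=
  spine S p s B (s.take i) (s.drop i)

lemma rr_length {S : CCS Act Const} {p : Proc Act Const} {s : List Act} {B : Set Act} :
    rr S p s B s.length = rend S p s B := by
  rw [rr, List.drop_length, spine]

lemma rr_succ_eq {S : CCS Act Const} {p : Proc Act Const} {s : List Act} {B : Set Act}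
    {i : ℕ} (h : i < s.length) :
    rr S p s B i = .ext (.pre (some (S.co s[i])) (rr S p s B (i+1)))
      (.pre none (.ext .one (gSrv S p (s.take i)))) := by
  rw [rr, List.drop_eq_getElem_cons h, spine, rr, List.take_concat_get' s i h]

lemma not_canOk_spine {S : CCS Act Const} {p : Proc Act Const} {s : List Act} {B : Set Act} :
    ∀ (u t : List Act), ¬ CanOk S (spine S p s B t u) := by
  intro u
  induction u with
  | nil => intro t; exact not_canOk_rend
  | cons a u ih =>
      rintro t ⟨y, h⟩
      rw [spine] at h
      rcases step_ext_inv h with h1 | h1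
      · rcases step_pre_some h1 with ⟨h', -⟩; cases h'
      · rcases step_pre_none h1 with ⟨h', -⟩; cases h'

lemma not_canOk_rr {S : CCS Act Const} {p : Proc Act Const} {s : List Act} {B : Set Act}
    (i : ℕ) : ¬ CanOk S (rr S p s B i) :=
  not_canOk_spine _ _

lemma ext_inj {p₁ p₂ q₁ q₂ : Proc Act Const} (h : Proc.ext p₁ p₂ = Proc.ext q₁ q₂) :
    p₁ = q₁ ∧ p₂ = q₂ := by
  rw [Proc.ext, Proc.ext] at h
  injection h with h
  constructor
  · have := congrFun h 0
    simpa using this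
  · have := congrFun h 1
    simpa using this

lemma spine_ne_rend {S : CCS Act Const} {p : Proc Act Const} {s : List Act} {B : Set Act}
    (a : Act) (u t : List Act) : spine S p s B t (a :: u) ≠ rend S p s B := by
  intro h
  rw [spine, Proc.ext, rend] at h
  injection h with h
  have := congrFun h 1
  simp only [if_neg one_ne_zero, if_pos rfl] at this
  cases hc : cEnum S p s B 1 with
  | none => rw [hc] at this; cases this
  | some b =>
      rw [hc] at this
      injection this with this
      injection this with h1 h2
      cases h1

lemma spine_len_inj {S : CCS Act Const} {p : Proc Act Const} {s : List Act} {B : Set Act} :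
    ∀ (u u' t t' : List Act), spine S p s B t u = spine S p s B t' u' →
      u.length = u'.length := by
  intro u
  induction u with
  | nil =>
      intro u' t t' h
      cases u' with
      | nil => rfl
      | cons a v => exact absurd h.symm (spine_ne_rend a v t')
  | cons a v ih =>
      intro u' t t' h
      cases u' with
      | nil => exact absurd h (spine_ne_rend a v t)
      | cons a' v' =>
          rw [spine, spine] at h
          rcases ext_inj h with ⟨h1, -⟩
          injection h1 with h1 h2
          simpa using ih v' _ _ h2

lemma rr_inj {S : CCS Act Const} {p : Proc Act Const} {s : List Act} {B : Set Act}
    {i j : ℕ} (hi : i ≤ s.length) (hj : j ≤ s.length) (h : rr S p s B i = rr S p s B j) :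
    i = j := by
  have := spine_len_inj _ _ _ _ h
  simp only [List.length_drop] at this
  omega

end Test


section Main2
variable {Act Const : Type}

lemma stuck_end {S : CCS Act Const} {p : Proc Act Const} {s : List Act} {B : Set Act}
    {q' : Proc Act Const} (hst : Stable S q') (hready : ready S q' = B) :
    StateStuck S (q', rend S p s B) := by
  rintro ⟨t, hpt⟩
  cases hpt with
  | left hs => exact hst ⟨_, hs⟩
  | right hs =>
      rcases step_rend_inv hs with ⟨a, -, hl, -⟩
      cases hl
  | @sync _ _ _ _ c hs1 hs2 =>
      rcases step_rend_inv hs2 with ⟨a, ha, hl, -⟩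
      injection hl with hl
      have hca : c = a := by
        have := congrArg S.co hl
        rwa [S.co_invol, S.co_invol] at this
      subst hca
      exact ha.2.2 (hready ▸ ⟨_, hs1⟩)

lemma main2_comp {S : CCS Act Const} {p : Proc Act Const} {s : List Act} {B : Set Act} :
    ∀ {u : List Act} {q₀ q' : Proc Act Const}, Weak S q₀ u q' →
      ∀ i, i ≤ s.length → u = s.drop i → StateStuck S (q', rend S p s B) →
      ∃ σ, MaxComp S σ ∧ σ 0 = (q₀, rr S p s B i) ∧
        ∀ k, ∃ j, (σ k).2 = rr S p s B j := by
  intro u q₀ q' h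
  induction h with
  | @refl p₁ =>
      intro i hi hu hstuck
      have hrr : rr S p s B i = rend S p s B := by
        rw [rr, ← hu, spine]
      refine ⟨fun _ => (p₁, rr S p s B i), fun k => Or.inr ⟨?_, rfl⟩, rfl, fun k => ⟨i, rfl⟩⟩
      rw [hrr]
      exact hstuck
  | @tau p₁ p₁' q₁ u' hs _ ih =>
      intro i hi hu hstuck
      rcases ih i hi hu hstuck with ⟨σ, h1, h2, h3⟩
      refine ⟨fun k => Nat.casesOn k (p₁, rr S p s B i) σ,
        maxComp_cons h1 (by rw [h2]; exact ParTau.left hs), rfl, ?_⟩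
      intro k
      cases k with
      | zero => exact ⟨i, rfl⟩
      | succ k => exact h3 k
  | @act p₁ p₁' q₁ a u' hs _ ih =>
      intro i hi hu hstuck
      have hilt : i < s.length := by
        by_contra h'
        rw [List.drop_eq_nil_of_le (not_lt.1 h')] at hu
        cases hu
      rw [List.drop_eq_getElem_cons hilt] at hu
      injection hu with hu1 hu2
      subst hu1
      rcases ih (i+1) hilt hu2 hstuck with ⟨σ, h1, h2, h3⟩
      have hstep : Step S (rr S p s B i) (.act (S.co s[i])) (rr S p s B (i+1)) := by
        rw [rr_succ_eq hilt]
        exact step_ext_left (.preAct _ _)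
      refine ⟨fun k => Nat.casesOn k (p₁, rr S p s B i) σ,
        maxComp_cons h1 (by rw [h2]; exact ParTau.sync hs hstep), rfl, ?_⟩
      intro k
      cases k with
      | zero => exact ⟨i, rfl⟩
      | succ k => exact h3 k

lemma main2 {S : CCS Act Const} {p q : Proc Act Const} {s : List Act} {B : Set Act}
    {q' : Proc Act Const} (hWq : Weak S q s q') (hStq : Stable S q')
    (hready : ready S q' = B) (hM : MustSC S q (rr S p s B 0)) : False := by
  rcases main2_comp (p := p) (B := B) hWq 0 (Nat.zero_le _) rfl
      (stuck_end hStq hready) with ⟨σ, h1, h2, h3⟩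
  rcases hM σ h2 h1 with ⟨⟨k, hok⟩, -⟩
  rcases h3 k with ⟨j, hj⟩
  rw [hj] at hok
  exact not_canOk_rr j hok

end Main2


section Main1
variable {Act Const : Type}

lemma nat_mono_bdd_const :
    ∀ (n : ℕ) (I : ℕ → ℕ), (∀ k l, k ≤ l → I k ≤ I l) → (∀ k, I k ≤ n) →
      ∃ K, ∀ k, K ≤ k → I k = I K := by
  intro n
  induction n with
  | zero =>
      intro I hm hb
      exact ⟨0, fun k _ => by have h1 := hb k; have h2 := hb 0; omega⟩
  | succ n ih =>
      intro I hm hb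
      by_cases h : ∃ k, I k = n + 1
      · rcases h with ⟨k₀, hk₀⟩
        refine ⟨k₀, fun k hk => ?_⟩
        have h1 := hm k₀ k hk
        have h2 := hb k
        omega
      · push_neg at h
        exact ih I hm (fun k => by have h1 := hb k; have h2 := h k; omega)

lemma main1 {S : CCS Act Const} {p : Proc Act Const} {s : List Act} {B : Set Act}
    (hconvA : convAlong S p s) (husb : usbU S p s)
    (H : ∀ A ∈ acc S p s, ∃ a, a ∈ A ∧ a ∈ uaU S p s ∧ a ∉ B) :
    MustSC S p (rr S p s B 0) := by
  intro σ h0 hσ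
  by_contra hG
  have NOTSTUCK : ∀ k i, i ≤ s.length →
      ((σ k).2 = rr S p s B i ∧ Weak S p (s.take i) (σ k).1 ∧
        ((∃ k' ≤ k, CanOk S (σ k').1) ∨ UWeak S p (s.take i) (σ k).1)) →
      ¬ StateStuck S (σ k) := by
    intro k i hi hInv hstuck
    obtain ⟨hr, hW, -⟩ := hInv
    have hσk : σ k = ((σ k).1, rr S p s B i) := by rw [Prod.ext_iff]; exact ⟨rfl, hr⟩
    rw [hσk] at hstuck
    rcases Nat.lt_or_ge i s.length with hlt | hge
    · refine hstuck ⟨((σ k).1, .ext .one (gSrv S p (s.take i))), ParTau.right ?_⟩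
      rw [rr_succ_eq hlt]
      exact step_ext_right (.preTau _)
    · have hin : i = s.length := le_antisymm hi hge
      have hstable : Stable S (σ k).1 := by
        rintro ⟨x', hx'⟩
        exact hstuck ⟨_, ParTau.left hx'⟩
      have hWs : Weak S p s (σ k).1 := by rw [hin, List.take_length] at hW; exact hW
      have hacc : ready S (σ k).1 ∈ acc S p s := ⟨_, hWs, hstable, rfl⟩
      rcases H _ hacc with ⟨a, haR, haU, haB⟩
      rcases haR with ⟨y, hy⟩
      have haC : a ∈ Cset S p s B :=
        ⟨⟨(σ k).1, weak_mem_reach hWs, y, hy⟩, haU, haB⟩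
      have h2 : Step S (rr S p s B i) (.act (S.co a))
          (.ext .one (gSrv S p (s ++ [a]))) := by
        rw [hin, rr_length]
        exact step_rend_intro haC
      exact hstuck ⟨_, ParTau.sync hy h2⟩
  have STEP : ∀ k i, i ≤ s.length →
      ((σ k).2 = rr S p s B i ∧ Weak S p (s.take i) (σ k).1 ∧
        ((∃ k' ≤ k, CanOk S (σ k').1) ∨ UWeak S p (s.take i) (σ k).1)) →
      ParTau S (σ k) (σ (k+1)) →
      (((σ (k+1)).2 = rr S p s B i ∧ Weak S p (s.take i) (σ (k+1)).1 ∧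
          ((∃ k' ≤ k+1, CanOk S (σ k').1) ∨ UWeak S p (s.take i) (σ (k+1)).1)) ∧
        Step S (σ k).1 .tau (σ (k+1)).1) ∨
      (i < s.length ∧ ((σ (k+1)).2 = rr S p s B (i+1) ∧
          Weak S p (s.take (i+1)) (σ (k+1)).1 ∧
          ((∃ k' ≤ k+1, CanOk S (σ k').1) ∨ UWeak S p (s.take (i+1)) (σ (k+1)).1))) := by
    intro k i hi hInv hpt
    obtain ⟨hr, hW, hP⟩ := hInv
    have hσk : σ k = ((σ k).1, rr S p s B i) := by rw [Prod.ext_iff]; exact ⟨rfl, hr⟩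
    rw [hσk] at hpt
    generalize hE : σ (k+1) = st at hpt
    cases hpt with
    | @left _ x' _ hs =>
        refine Or.inl ⟨⟨rfl, hW.snoc_tau hs, ?_⟩, hs⟩
        rcases hP with ⟨k', hk', hok⟩ | hU
        · exact Or.inl ⟨k', hk'.trans (Nat.le_succ k), hok⟩
        · by_cases hok' : CanOk S x'
          · exact Or.inl ⟨k+1, le_refl _, by rw [hE]; exact hok'⟩
          · exact Or.inr (hU.snoc_tau hs hok')
    | @right _ _ y hs =>
        rcases Nat.lt_or_ge i s.length with hlt | hge
        · rw [rr_succ_eq hlt] at hs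
          rcases step_ext_inv hs with h1 | h1
          · rcases step_pre_some h1 with ⟨h', -⟩; cases h'
          · rcases step_pre_none h1 with ⟨-, rfl⟩
            exfalso
            apply hG
            refine ⟨⟨k+1, by rw [hE]; exact canOk_ext_one⟩, ?_⟩
            rcases hP with ⟨k', hk', hok⟩ | hU
            · exact ⟨k', hok⟩
            · have husb' : usbU S p (s.take i) := usbU_take s p husb i
              have hM := gSrv_spec husb' hU
              rcases pay hM (wEnd_uweak_nil hU) (maxComp_tail hσ (k+1))
                (by simpa using hE) with ⟨m, hm⟩
              exact ⟨k+1+m, hm⟩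
        · have hin : i = s.length := le_antisymm hi hge
          rw [hin, rr_length] at hs
          rcases step_rend_inv hs with ⟨a, -, hl, -⟩
          cases hl
    | @sync _ x' _ y' c hs1 hs2 =>
        rcases Nat.lt_or_ge i s.length with hlt | hge
        · rw [rr_succ_eq hlt] at hs2
          rcases step_ext_inv hs2 with h1 | h1
          · rcases step_pre_some h1 with ⟨h', rfl⟩
            injection h' with h'
            have hc : c = s[i] := by
              have h'' := congrArg S.co h'
              rwa [S.co_invol, S.co_invol] at h''
            subst hc
            refine Or.inr ⟨hlt, rfl, ?_, ?_⟩
            · have h2 := hW.snoc_act hs1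
              rwa [List.take_concat_get' s i hlt] at h2
            · rcases hP with ⟨k', hk', hok⟩ | hU
              · exact Or.inl ⟨k', hk'.trans (Nat.le_succ k), hok⟩
              · by_cases hok' : CanOk S x'
                · exact Or.inl ⟨k+1, le_refl _, by rw [hE]; exact hok'⟩
                · refine Or.inr ?_
                  have h2 := hU.snoc_act hs1 hok'
                  rwa [List.take_concat_get' s i hlt] at h2
          · rcases step_pre_none h1 with ⟨h', -⟩; cases h'
        · have hin : i = s.length := le_antisymm hi hge
          exfalso
          apply hG
          rw [hin, rr_length] at hs2
          rcases step_rend_inv hs2 with ⟨a, haC, hl, rfl⟩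
          injection hl with hl
          have hc : a = c := by
            have h'' := congrArg S.co hl
            rw [S.co_invol, S.co_invol] at h''
            exact h''.symm
          subst hc
          refine ⟨⟨k+1, by rw [hE]; exact canOk_ext_one⟩, ?_⟩
          rcases hP with ⟨k', hk', hok⟩ | hU
          · exact ⟨k', hok⟩
          · by_cases hok' : CanOk S x'
            · exact ⟨k+1, by rw [hE]; exact hok'⟩
            · have hUs : UWeak S p s (σ k).1 := by
                rw [hin, List.take_length] at hU; exact hU
              have hU' : UWeak S p (s ++ [a]) x' := hUs.snoc_act hs1 hok'
              have husba : usbU S p (s ++ [a]) := haC.2.1 ⟨x', hU'⟩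
              have hM := gSrv_spec husba hU'
              rcases pay hM (wEnd_uweak_nil hU') (maxComp_tail hσ (k+1))
                (by simpa using hE) with ⟨m, hm⟩
              exact ⟨k+1+m, hm⟩
  have AllInv : ∀ k, ∃ i, i ≤ s.length ∧
      ((σ k).2 = rr S p s B i ∧ Weak S p (s.take i) (σ k).1 ∧
        ((∃ k' ≤ k, CanOk S (σ k').1) ∨ UWeak S p (s.take i) (σ k).1)) := by
    intro k
    induction k with
    | zero =>
        refine ⟨0, Nat.zero_le _, by rw [h0], ?_, ?_⟩
        · simp only [List.take_zero]
          rw [h0]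
          exact .refl p
        · by_cases hok : CanOk S p
          · exact Or.inl ⟨0, le_refl _, by rw [h0]; exact hok⟩
          · refine Or.inr ?_
            simp only [List.take_zero]
            rw [h0]
            exact .refl hok
    | succ k ih =>
        rcases ih with ⟨i, hi, hInv⟩
        rcases hσ k with hpt | ⟨hstuck, -⟩
        · rcases STEP k i hi hInv hpt with ⟨hInv', -⟩ | ⟨hlt, hInv'⟩
          · exact ⟨i, hi, hInv'⟩
          · exact ⟨i+1, hlt, hInv'⟩
        · exact absurd hstuck (NOTSTUCK k i hi hInv)
  have hIle : ∀ k, (AllInv k).choose ≤ s.length := fun k => (AllInv k).choose_spec.1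
  have hIinv := fun k => (AllInv k).choose_spec.2
  have hstep' : ∀ k, ParTau S (σ k) (σ (k+1)) := by
    intro k
    rcases hσ k with h | ⟨hstuck, -⟩
    · exact h
    · exact absurd hstuck (NOTSTUCK k _ (hIle k) (hIinv k))
  have hIsucc : ∀ k, (AllInv (k+1)).choose = (AllInv k).choose ∨
      (AllInv (k+1)).choose = (AllInv k).choose + 1 := by
    intro k
    rcases STEP k _ (hIle k) (hIinv k) (hstep' k) with ⟨hInv', -⟩ | ⟨hlt, hInv'⟩
    · exact Or.inl (rr_inj (hIle (k+1)) (hIle k)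
        ((hIinv (k+1)).1.symm.trans hInv'.1))
    · exact Or.inr (rr_inj (hIle (k+1)) hlt
        ((hIinv (k+1)).1.symm.trans hInv'.1))
  have hmono : ∀ k l, k ≤ l → (AllInv k).choose ≤ (AllInv l).choose := by
    intro k l hkl
    induction hkl with
    | refl => exact le_refl _
    | @step m hm ih =>
        rcases hIsucc m with h | h <;> omega
  obtain ⟨K, hK⟩ := nat_mono_bdd_const s.length (fun k => (AllInv k).choose) hmono hIle
  have htau : ∀ k, K ≤ k → Step S (σ k).1 .tau (σ (k+1)).1 := by
    intro k hk
    rcases STEP k _ (hIle k) (hIinv k) (hstep' k) with ⟨-, hs⟩ | ⟨hlt, hInv'⟩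
    · exact hs
    · exfalso
      have h1 : (AllInv (k+1)).choose = (AllInv k).choose + 1 :=
        rr_inj (hIle (k+1)) hlt ((hIinv (k+1)).1.symm.trans hInv'.1)
      have h2 := hK k hk
      have h3 := hK (k+1) (hk.trans (Nat.le_succ k))
      omega
  have hconvx : Conv S (σ K).1 :=
    convAlong_weak_conv s p hconvA (AllInv K).choose _ (hIinv K).2.1
  exact hconvx ⟨fun m => (σ (K+m)).1, rfl, fun m => htau (K+m) (Nat.le_add_right K m)⟩

end Main1

end MTP


/-- Lemma 5.9: matching of acceptance sets for the peer preorder. -/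
theorem p2pLe_acceptance_sets {Act Const : Type} (S : MTP.CCS Act Const)
    (p q : MTP.Proc Act Const) (s : List Act)
    (hLe : MTP.p2pLe S p q)
    (hConv : MTP.convP S p s) :
    ∀ B ∈ MTP.acc S q s, ∃ A ∈ MTP.acc S p s, A ∩ MTP.uaU S p s ⊆ B := by
  intro B hB
  by_contra hcon
  push_neg at hcon
  have H : ∀ A ∈ MTP.acc S p s, ∃ a, a ∈ A ∧ a ∈ MTP.uaU S p s ∧ a ∉ B := by
    intro A hA
    rcases Set.not_subset.1 (hcon A hA) with ⟨a, ha, hnb⟩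
    exact ⟨a, ha.1, ha.2, hnb⟩
  rcases hB with ⟨q', hWq, hStq, hBr⟩
  have h1 := MTP.main1 hConv.1 hConv.2 H
  exact MTP.main2 hWq hStq hBr.symm (hLe _ h1)
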